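/- arXiv:2405.13054 — 3 statements merged into one kernel-verified Lean document; each statement's English description precedes it below -/
import Mathlib

section
/- Let P, Q be integers with Lucas sequences U, V and discriminant D = P² − 4Q. Then for every natural number n, U(3n) = 3·Q^n·U(n) + D·U(n)³. -/
/-! Two applications of the addition formula `U(m+n+1) = U(m+1) U(n+1) - Q U(m) U(n)` express
`U(3n)` as a cubic in `U(n-1)`, `U(n)`, `U(n+1)`. The Cassini-type invariant
`U(n+1)² - P U(n+1) U(n) + Q U(n)² = Q^n` (the determinant of the `n`-th power of the companion
matrix of `x² - P x + Q`) then reduces this cubic to `3 Q^n U(n) + D U(n)³`. -/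

def lucasU (P Q : ℤ) : ℕ → ℤ
  | 0 => 0
  | 1 => 1
  | n + 2 => P * lucasU P Q (n + 1) - Q * lucasU P Q n

def lucasV (P Q : ℤ) : ℕ → ℤ
  | 0 => 2
  | 1 => P
  | n + 2 => P * lucasV P Q (n + 1) - Q * lucasV P Q n

lemma lucasU_add_two (P Q : ℤ) (n : ℕ) :
    lucasU P Q (n + 2) = P * lucasU P Q (n + 1) - Q * lucasU P Q n := rfl

lemma lucasU_add_add_one (P Q : ℤ) (m n : ℕ) :
    lucasU P Q (m + n + 1) =
      lucasU P Q (m + 1) * lucasU P Q (n + 1) - Q * lucasU P Q m * lucasU P Q n := by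
  induction n using Nat.twoStepInduction with
  | zero => simp [lucasU]
  | one => simp [lucasU]; ring
  | more n ih₀ ih₁ =>
    rw [← add_assoc] at ih₁
    rw [show m + (n + 2) + 1 = m + n + 1 + 2 by omega, lucasU_add_two,
      lucasU_add_two P Q (n + 1)]
    linear_combination P * ih₁ - Q * ih₀ + Q * lucasU P Q m * lucasU_add_two P Q n

lemma lucasU_succ_sq_sub_mul_add_sq (P Q : ℤ) (n : ℕ) :
    lucasU P Q (n + 1) ^ 2 - P * lucasU P Q (n + 1) * lucasU P Q n + Q * lucasU P Q n ^ 2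
      = Q ^ n := by
  induction n with
  | zero => simp [lucasU]
  | succ n ih =>
    rw [lucasU_add_two]
    linear_combination Q * ih

theorem stmt12 (P Q : ℤ) (n : ℕ) :
    lucasU P Q (3 * n) = 3 * Q ^ n * lucasU P Q n + (P ^ 2 - 4 * Q) * lucasU P Q n ^ 3 := by
  cases n with
  | zero => simp [lucasU]
  | succ n =>
    have h₃ := lucasU_add_add_one P Q (2 * n + 1) (n + 1)
    have h₂ := lucasU_add_add_one P Q (n + 1) n
    have h₁ := lucasU_add_add_one P Q n n
    rw [show 2 * n + 1 + (n + 1) + 1 = 3 * (n + 1) by omega] at h₃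
    rw [show n + 1 + n + 1 = 2 * n + 1 + 1 by omega] at h₂
    rw [show n + n + 1 = 2 * n + 1 by omega] at h₁
    rw [h₃, h₂, h₁, lucasU_add_two, pow_succ]
    linear_combination 3 * Q * lucasU P Q (n + 1) * lucasU_succ_sq_sub_mul_add_sq P Q n
end

section
/- Let P, Q be integers with Lucas sequence U of the first kind. For all natural numbers a, b, c, d, r with a + d = b + c, the quantity Q^{-r}·(U(a+r)·U(d+r) − U(b+r)·U(c+r)) is independent of r; equivalently, U(a+r)·U(d+r) − U(b+r)·U(c+r) = Q^r·(U(a)·U(d) − U(b)·U(c)). -/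
namespace lucasU

variable (P Q : ℤ)

theorem add_two (n : ℕ) : lucasU P Q (n + 2) = P * lucasU P Q (n + 1) - Q * lucasU P Q n := rfl

theorem add (m n : ℕ) :
    lucasU P Q (m + n + 1) =
      lucasU P Q (m + 1) * lucasU P Q (n + 1) - Q * (lucasU P Q m * lucasU P Q n) := by
  induction n generalizing m with
  | zero => simp [lucasU]
  | succ n ih =>
    rw [show m + (n + 1) + 1 = m + 1 + n + 1 by ring, ih (m + 1), add_two, add_two]
    ring

theorem mul_sub_mul_add_one {a b c d : ℕ} (h : a + d = b + c) :
    lucasU P Q (a + 1) * lucasU P Q (d + 1) - lucasU P Q (b + 1) * lucasU P Q (c + 1) =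
      Q * (lucasU P Q a * lucasU P Q d - lucasU P Q b * lucasU P Q c) := by
  have had := add P Q a d
  have hbc := add P Q b c
  rw [h] at had
  linear_combination hbc - had

end lucasU

theorem stmt18 (P Q : ℤ) (a b c d r : ℕ) (h : a + d = b + c) :
    lucasU P Q (a + r) * lucasU P Q (d + r) - lucasU P Q (b + r) * lucasU P Q (c + r) =
      Q ^ r * (lucasU P Q a * lucasU P Q d - lucasU P Q b * lucasU P Q c) := by
  induction r with
  | zero => simp
  | succ r ih =>
    have hr : a + r + (d + r) = b + r + (c + r) := by omega
    simp only [← add_assoc, lucasU.mul_sub_mul_add_one P Q hr, ih]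
    ring
end

section
/- Let P, Q be integers with Lucas sequence U of the first kind. Then for all natural numbers n ≥ m, U(n)² − U(n−m)·U(n+m) = Q^{n−m}·U(m)² (Catalan's identity for general Lucas sequences). -/
/-!
Write `x` and `y` for two solutions of the recurrence. Their Casoratian
`x k * y (k + 1) - x (k + 1) * y k` gets multiplied by `Q` at each step, and the addition formula
`x (k + m) = U m * x (k + 1) - Q * U (m - 1) * x k` turns the lag-`m` determinant
`x k * y (k + m) - x (k + m) * y k` into `U m` times the Casoratian. Catalan's identity is the case
`x = U (· + m)`, `y = U`, whose Casoratian at `0` is `U m`.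
-/

def IsLucasSeq {R : Type*} [CommRing R] (P Q : R) (x : ℕ → R) : Prop :=
  ∀ n, x (n + 2) = P * x (n + 1) - Q * x n

namespace IsLucasSeq

variable {R : Type*} [CommRing R] {P Q : R} {x y : ℕ → R}

theorem shift (hx : IsLucasSeq P Q x) (k : ℕ) : IsLucasSeq P Q (fun n => x (n + k)) := by
  intro n
  simpa only [Nat.add_right_comm _ k] using hx (n + k)

theorem casoratian_eq (hx : IsLucasSeq P Q x) (hy : IsLucasSeq P Q y) (k : ℕ) :
    x k * y (k + 1) - x (k + 1) * y k = Q ^ k * (x 0 * y 1 - x 1 * y 0) := by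
  induction k with
  | zero => simp
  | succ k ih =>
    rw [hx k, hy k, pow_succ]
    linear_combination Q * ih

end IsLucasSeq

theorem lucasU_isLucasSeq (P Q : ℤ) : IsLucasSeq P Q (lucasU P Q) := fun _ => rfl

theorem IsLucasSeq.eq_lucasU_mul_add {P Q : ℤ} {x : ℕ → ℤ} (hx : IsLucasSeq P Q x) (k m : ℕ) :
    x (k + (m + 1)) = lucasU P Q (m + 1) * x (k + 1) - Q * lucasU P Q m * x k := by
  induction m using Nat.twoStepInduction with
  | zero => simp [lucasU]
  | one => rw [hx k]; simp [lucasU]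
  | more m ih₁ ih₂ =>
    have hstep : x (k + (m + 2 + 1)) = P * x (k + (m + 1 + 1)) - Q * x (k + (m + 1)) :=
      hx (k + m + 1)
    rw [hstep, ih₂, ih₁, lucasU_isLucasSeq P Q (m + 1), lucasU_isLucasSeq P Q m]
    ring

theorem IsLucasSeq.lag_det_eq {P Q : ℤ} {x y : ℕ → ℤ} (hx : IsLucasSeq P Q x)
    (hy : IsLucasSeq P Q y) (k m : ℕ) :
    x k * y (k + m) - x (k + m) * y k = lucasU P Q m * Q ^ k * (x 0 * y 1 - x 1 * y 0) := by
  cases m with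
  | zero => simp [lucasU]
  | succ m =>
    rw [hx.eq_lucasU_mul_add, hy.eq_lucasU_mul_add]
    linear_combination lucasU P Q (m + 1) * hx.casoratian_eq hy k

theorem stmt19 (P Q : ℤ) (m n : ℕ) (h : m ≤ n) :
    lucasU P Q n ^ 2 - lucasU P Q (n - m) * lucasU P Q (n + m) =
      Q ^ (n - m) * lucasU P Q m ^ 2 := by
  obtain ⟨k, rfl⟩ := Nat.exists_eq_add_of_le' h
  have hU := lucasU_isLucasSeq P Q
  have key := (hU.shift m).lag_det_eq hU k m
  simp only [Nat.add_sub_cancel, zero_add, lucasU, mul_one, mul_zero, sub_zero] at key ⊢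
  linear_combination key
end
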